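/- In the boy-centered, day-neutral procedure, where among families with at least one boy a uniformly random boy's birth day is announced, the conditional probability of two boys given announcement '(B, Tuesday)' equals 1/3. -/

import Mathlib

inductive Gender | B | G deriving DecidableEq

instance : Fintype Gender := ⟨{Gender.B, Gender.G}, by intro x; cases x <;> simp⟩

/-- A child is a (gender, weekday) pair; a family is a pair of children. -/
abbrev Child := Gender × Fin 7
abbrev Family := Child × Child

/-- Conditional probability under the uniform distribution on a finite type. -/
def condProb {α : Type*} [Fintype α] (A E : α → Prop) [DecidablePred A] [DecidablePred E] : ℚ :=
  ((Finset.univ.filter fun s => A s ∧ E s).card : ℚ) / ((Finset.univ.filter E).card : ℚ)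

/-- Boy-centered day announcement: two-boy families announce the day of the
coin-chosen boy, one-boy families announce their boy'"'"'s day, others nothing. -/
def boyDay (x : Family × Bool) : Option (Fin 7) :=
  match x.1.1.1, x.1.2.1 with
  | Gender.B, Gender.B => some (if x.2 then x.1.1.2 else x.1.2.2)
  | Gender.B, Gender.G => some x.1.1.2
  | Gender.G, Gender.B => some x.1.2.2
  | Gender.G, Gender.G => none

/-!
Relabelling the days of the week by a permutation σ preserves "two boys" and changes the announced
day from `t` to `σ t`. Hence, within any relabelling-invariant event, every day is announced equally
often, so conditioning on the announcement of a particular day is the same as conditioning on some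
day being announced, i.e. on the family having a boy. Of the three equally likely boy-containing
gender patterns, exactly one is two boys.
-/

open Finset

section DayNeutral

variable {α D : Type*} [Fintype α] [DecidableEq D]
  (P : α → Prop) [DecidablePred P] (f : α → Option D) (relabel : Equiv.Perm D → Equiv.Perm α)

theorem card_filter_eq_some_eq
    (hP : ∀ σ x, P (relabel σ x) ↔ P x) (hf : ∀ σ x, f (relabel σ x) = (f x).map σ) (t t' : D) :
    #{x | P x ∧ f x = some t} = #{x | P x ∧ f x = some t'} := by
  refine card_equiv (relabel (Equiv.swap t t')) fun x => ?_
  have hswap : ∀ s, Equiv.swap t t' s = t' ↔ s = t := fun s => by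
    rw [Equiv.swap_apply_eq_iff, Equiv.swap_apply_right]
  simp [hP, hf, hswap]

theorem card_mul_card_filter_eq_some [Fintype D]
    (hP : ∀ σ x, P (relabel σ x) ↔ P x) (hf : ∀ σ x, f (relabel σ x) = (f x).map σ) (t : D) :
    Fintype.card D * #{x | P x ∧ f x = some t} = #{x | P x ∧ (f x).isSome} := by
  have hmaps : Set.MapsTo f ↑({x | P x ∧ (f x).isSome} : Finset α)
      ↑(univ.map .some : Finset (Option D)) := by
    intro x hx
    obtain ⟨s, hs⟩ := Option.isSome_iff_exists.mp (mem_filter.mp hx).2.2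
    simp [hs]
  rw [card_eq_sum_card_fiberwise hmaps, sum_map, ← card_univ, ← smul_eq_mul, ← sum_const]
  refine sum_congr rfl fun t' _ => ?_
  rw [card_filter_eq_some_eq P f relabel hP hf t t', filter_filter]
  congr 1
  ext x
  simp only [mem_filter, mem_univ, true_and, Function.Embedding.some_apply]
  constructor
  · rintro ⟨hx, hfx⟩; simp [hx, hfx]
  · rintro ⟨⟨hx, -⟩, hfx⟩; exact ⟨hx, hfx⟩

theorem condProb_eq_some_eq_condProb_isSome [Fintype D]
    (hP : ∀ σ x, P (relabel σ x) ↔ P x) (hf : ∀ σ x, f (relabel σ x) = (f x).map σ) (t : D) :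
    condProb P (fun x => f x = some t) = condProb P (fun x => (f x).isSome) := by
  have hD : (Fintype.card D : ℚ) ≠ 0 := Nat.cast_ne_zero.mpr (Fintype.card_pos_iff.mpr ⟨t⟩).ne'
  have htrue := card_mul_card_filter_eq_some (fun _ => True) f relabel (by simp) hf t
  simp only [true_and] at htrue
  simp only [condProb]
  rw [← mul_div_mul_left _ _ hD, ← Nat.cast_mul, ← Nat.cast_mul,
    card_mul_card_filter_eq_some P f relabel hP hf t, htrue]

end DayNeutral

def relabelDays (σ : Equiv.Perm (Fin 7)) : Equiv.Perm (Family × Bool) :=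
  ((Equiv.prodCongr (.refl Gender) σ).prodCongr (Equiv.prodCongr (.refl Gender) σ)).prodCongr
    (.refl Bool)

theorem boyDay_relabelDays (σ : Equiv.Perm (Fin 7)) (x : Family × Bool) :
    boyDay (relabelDays σ x) = (boyDay x).map σ := by
  obtain ⟨⟨⟨g₁, d₁⟩, ⟨g₂, d₂⟩⟩, b⟩ := x
  cases g₁ <;> cases g₂ <;> cases b <;> rfl

set_option maxRecDepth 4000 in
theorem card_filter_twoBoys_isSome :
    #{x : Family × Bool | (x.1.1.1 = Gender.B ∧ x.1.2.1 = Gender.B) ∧ (boyDay x).isSome} = 98 := by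
  decide

set_option maxRecDepth 4000 in
theorem card_filter_boyDay_isSome : #{x : Family × Bool | (boyDay x).isSome} = 294 := by
  decide

theorem stmt_9 (t : Fin 7) :
    condProb (fun x : Family × Bool => x.1.1.1 = Gender.B ∧ x.1.2.1 = Gender.B)
      (fun x => boyDay x = some t) = 1 / 3 := by
  rw [condProb_eq_some_eq_condProb_isSome _ boyDay relabelDays (fun _ _ => Iff.rfl)
    boyDay_relabelDays]
  simp only [condProb, card_filter_twoBoys_isSome, card_filter_boyDay_isSome]
  norm_num
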